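/- arXiv:math/0504215 — 4 statements merged into one kernel-verified Lean document; each statement's English description precedes it below -/
import Mathlib

section
/- Let B be an abelian group, V an index set, and for each v ∈ V a homomorphism r_v : B → T_v to a torsion abelian group. Let P1, P2, Q1, Q2 ∈ B with integers e1, e2 such that Q1 = e1·P1 and Q2 = e2·P2. Assume: (i) for all but finitely many v, r_v(P1) + r_v(P2) = 0 implies r_v(Q1) + r_v(Q2) = 0; (ii) for every prime ℓ and every k ∈ ℕ there exist infinitely many v with r_v(P1 + P2) = 0 and r_v(P2) of order exactly ℓ^k. Then e1 = e2. -/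
theorem stmt_7 {B V : Type*} [AddCommGroup B]
    {T : V → Type*} [∀ v, AddCommGroup (T v)]
    (htors : ∀ v, ∀ t : T v, IsOfFinAddOrder t)
    (r : ∀ v, B →+ T v)
    (P1 P2 Q1 Q2 : B) (e1 e2 : ℤ)
    (hQ1 : Q1 = e1 • P1) (hQ2 : Q2 = e2 • P2)
    (h1 : {v : V | ¬ (r v P1 + r v P2 = 0 → r v Q1 + r v Q2 = 0)}.Finite)
    (h2 : ∀ ℓ : ℕ, ℓ.Prime → ∀ k : ℕ,
      {v : V | r v (P1 + P2) = 0 ∧ addOrderOf (r v P2) = ℓ ^ k}.Infinite) :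
    e1 = e2 := by
  have key : ∀ k : ℕ, ((2 : ℤ) ^ k) ∣ (e2 - e1) := by
    intro k
    obtain ⟨v, hvS, hvG⟩ := ((h2 2 Nat.prime_two k).diff h1).nonempty
    obtain ⟨hsum, hord⟩ := hvS
    rw [map_add] at hsum
    have hQ : r v Q1 + r v Q2 = 0 := by
      exact not_not.mp hvG hsum
    rw [hQ1, hQ2, map_zsmul, map_zsmul] at hQ
    have hP1 : r v P1 = - r v P2 := by
      rw [eq_neg_iff_add_eq_zero]; exact hsum
    have hz : (e2 - e1) • r v P2 = 0 := by
      rw [sub_smul]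
      rw [hP1, smul_neg] at hQ
      linear_combination (norm := abel) hQ
    have := addOrderOf_dvd_iff_zsmul_eq_zero.2 hz
    rw [hord] at this
    exact_mod_cast (by push_cast at this ⊢; exact this : ((2 : ℤ) ^ k) ∣ (e2 - e1))
  have h0 : e2 - e1 = 0 := by
    by_contra h
    obtain ⟨k, hk⟩ := pow_unbounded_of_one_lt (|e2 - e1|) (by norm_num : (1:ℤ) < 2)
    exact absurd (Int.le_of_dvd (abs_pos.mpr h) ((dvd_abs _ _).mpr (key k)))
      (not_le.mpr hk)
  linarith
end

section
/- Let B be an abelian group with a family of homomorphisms r_v : B → T_v to torsion abelian groups (v ∈ V), and let P, Q ∈ B have infinite order. Assume: (i) for all but finitely many v and all positive integers n, n·r_v(P) = 0 implies n·r_v(Q) = 0; (ii) for every pair of ℤ-linearly independent infinite-order points R, S ∈ B and every prime ℓ, there exist infinitely many v with r_v(R) = 0 and r_v(S) of order ℓ. Then P and Q are linearly dependent over ℤ, i.e., there exist nonzero integers α, β with α·P + β·Q = 0. -/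
theorem stmt_8 {B V : Type*} [AddCommGroup B]
    {T : V → Type*} [∀ v, AddCommGroup (T v)]
    (htors : ∀ v, ∀ t : T v, IsOfFinAddOrder t)
    (r : ∀ v, B →+ T v)
    (P Q : B) (hP : ¬ IsOfFinAddOrder P) (hQ : ¬ IsOfFinAddOrder Q)
    (h1 : {v : V | ¬ ∀ n : ℕ, 0 < n → n • r v P = 0 → n • r v Q = 0}.Finite)
    (h2 : ∀ R S : B, ¬ IsOfFinAddOrder R → ¬ IsOfFinAddOrder S →
      (∀ a b : ℤ, a • R + b • S = 0 → a = 0 ∧ b = 0) →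
      ∀ ℓ : ℕ, ℓ.Prime →
        {v : V | r v R = 0 ∧ addOrderOf (r v S) = ℓ}.Infinite) :
    ∃ α β : ℤ, α ≠ 0 ∧ β ≠ 0 ∧ α • P + β • Q = 0 := by
  by_contra hcon
  push_neg at hcon
  have hind : ∀ a b : ℤ, a • P + b • Q = 0 → a = 0 ∧ b = 0 := by
    intro a b hab
    by_cases ha : a = 0
    · subst ha
      simp only [zero_smul, zero_add] at hab
      rcases eq_or_ne b 0 with hb | hb
      · exact ⟨rfl, hb⟩
      · exact absurd ((isOfFinAddOrder_iff_zsmul_eq_zero).2 ⟨b, hb, hab⟩) hQ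
    · by_cases hb : b = 0
      · subst hb
        simp only [zero_smul, add_zero] at hab
        exact absurd ((isOfFinAddOrder_iff_zsmul_eq_zero).2 ⟨a, ha, hab⟩) hP
      · exact absurd hab (hcon a b ha hb)
  have hinf := h2 P Q hP hQ hind 2 Nat.prime_two
  obtain ⟨v, hv1, hv2⟩ := (hinf.diff h1).nonempty
  simp only [Set.mem_setOf_eq, not_not] at hv1 hv2
  obtain ⟨hrP, hord⟩ := hv1
  have : r v Q = 0 := by
    have := hv2 1 one_pos (by simp [hrP])
    simpa using this
  rw [this] at hord
  simp at hord
end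

section
/- Let B be an abelian group with a family of homomorphisms r_v : B → T_v to torsion abelian groups (v ∈ V), and suppose that for every finite list of infinite-order, ℤ-linearly independent elements R1, ..., Rs ∈ B, every prime ℓ, and every list of natural numbers k1, ..., ks, there exist infinitely many v such that r_v(R_t) has order exactly ℓ^{k_t} for each t. Let P1, ..., Pn, Q1, ..., Qn ∈ B have infinite order and suppose B is torsion-free. Assume that for every prime ℓ, for all positive integers m1, ..., mn and all but finitely many v: m1·r_v(P1) + ... + mn·r_v(Pn) = 0 implies m1·r_v(Q1) + ... + mn·r_v(Qn) = 0. Then there exists a nonzero integer e such that Q_i = e·P_i for every i ∈ {1, ..., n}. -/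
/-!
Applying the hypothesis on reductions to a single pair `A, C` shows that `C ∈ ℤ • A` as soon as
`s • r_v A = 0` forces `s • r_v C = 0` for almost all `v`: if `A, C` were independent there would be
infinitely many `v` with `r_v A = 0 ≠ r_v C`, and a relation `α • C = β • A` gives `α ∣ β` by
testing against reductions of `A` of every prime power order. Applied to `∑ mᵢ • Pᵢ` and
`∑ mᵢ • Qᵢ` this gives `∑ mᵢ • Qᵢ = e(m) • ∑ mᵢ • Pᵢ` for all positive `m`. Fixing `w` with
`a = ∑ wᵢ • Pᵢ ≠ 0` and varying `m = w + t • eₖ` yields `t • (Qₖ - e • Pₖ) = dₜ • (a + t • Pₖ)` for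
all `t`; two values of `t` put `a` and `Pₖ` on a line `α • a = β • Pₖ`, and then `β + α t` divides
a fixed integer for every `t`, which forces that integer, and with it `Qₖ - e • Pₖ`, to vanish.
-/

open Finset

/-- The conclusion of the paper's Theorem 5.1 for the reduction maps `r`. -/
def HasIndependentReductions {B V : Type*} [AddCommGroup B] {T : V → Type*}
    [∀ v, AddCommGroup (T v)] (r : ∀ v, B →+ T v) : Prop :=
  ∀ (s : ℕ) (R : Fin s → B), (∀ t, ¬ IsOfFinAddOrder (R t)) →
    LinearIndependent ℤ R → ∀ ℓ : ℕ, ℓ.Prime → ∀ k : Fin s → ℕ,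
    {v : V | ∀ t, addOrderOf (r v (R t)) = ℓ ^ k t}.Infinite

theorem Int.eq_zero_of_forall_add_mul_dvd {α β c : ℤ} (hα : α ≠ 0)
    (h : ∀ t : ℕ, β + α * t ∣ c) : c = 0 := by
  by_contra hc
  obtain ⟨N, hN⟩ : ∃ N : ℕ, (N : ℤ) = |c| + |β| + 1 :=
    ⟨c.natAbs + β.natAbs + 1, by push_cast; rfl⟩
  have hle : |β + α * N| ≤ |c| := by
    simpa only [Int.abs_eq_natAbs, Nat.cast_le] using Int.natAbs_le_of_dvd_ne_zero (h N) hc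
  have hgrow : (N : ℤ) ≤ |α * N| := by
    rw [abs_mul, Nat.abs_cast]
    exact le_mul_of_one_le_left (Nat.cast_nonneg N) (Int.one_le_abs hα)
  have htri : |α * N| ≤ |β + α * N| + |β| := by
    simpa using abs_sub (β + α * N) β
  linarith

section TorsionFree

variable {B : Type*} [AddCommGroup B] [NoZeroSMulDivisors ℤ B]

theorem not_isOfFinAddOrder_of_ne_zero {x : B} (hx : x ≠ 0) : ¬ IsOfFinAddOrder x := by
  rw [isOfFinAddOrder_iff_zsmul_eq_zero]
  rintro ⟨n, hn, hnx⟩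
  exact hx ((smul_eq_zero.mp hnx).resolve_left hn)

namespace HasIndependentReductions

variable {V : Type*} {T : V → Type*} [∀ v, AddCommGroup (T v)] {r : ∀ v, B →+ T v}

theorem infinite_setOf_addOrderOf_eq (hr : HasIndependentReductions r) {x : B} (hx : x ≠ 0)
    {ℓ : ℕ} (hℓ : ℓ.Prime) (j : ℕ) : {v | addOrderOf (r v x) = ℓ ^ j}.Infinite := by
  simpa using hr 1 ![x] (Fin.forall_fin_one.mpr (not_isOfFinAddOrder_of_ne_zero hx))
    (linearIndependent_unique_iff.mpr (by simpa using hx)) ℓ hℓ ![j]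

theorem infinite_setOf_map_eq_zero_and_ne_zero (hr : HasIndependentReductions r) {A C : B}
    (hAC : ∀ α β : ℤ, α • C = β • A → α = 0) : {v | r v A = 0 ∧ r v C ≠ 0}.Infinite := by
  have hC : C ≠ 0 := fun h => one_ne_zero (hAC 1 0 (by simp [h]))
  by_cases hA : A = 0
  · refine (hr.infinite_setOf_addOrderOf_eq hC Nat.prime_two 1).mono fun v hv => ⟨by simp [hA], ?_⟩
    intro h
    simp [h] at hv
  · have hind : LinearIndependent ℤ ![A, C] := by
      refine LinearIndependent.pair_iff.mpr fun s t hst => ?_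
      have ht : t = 0 := hAC t (-s) (by rw [neg_smul, eq_neg_iff_add_eq_zero, add_comm, hst])
      subst ht
      exact ⟨(smul_eq_zero.mp (by simpa using hst)).resolve_right hA, rfl⟩
    have hnt : ∀ t, ¬ IsOfFinAddOrder (![A, C] t) :=
      Fin.forall_fin_two.mpr ⟨not_isOfFinAddOrder_of_ne_zero hA, not_isOfFinAddOrder_of_ne_zero hC⟩
    refine (hr 2 ![A, C] hnt hind 2 Nat.prime_two ![0, 1]).mono fun v hv => ?_
    have hA' : addOrderOf (r v A) = 1 := by simpa using hv 0
    have hC' : addOrderOf (r v C) = 2 := by simpa using hv 1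
    exact ⟨AddMonoid.addOrderOf_eq_one_iff.mp hA', fun h => by simp [h] at hC'⟩

theorem exists_eq_zsmul_of_support_finite (hr : HasIndependentReductions r) (A C : B)
    (H : ∀ s : ℕ, 0 < s → {v | s • r v A = 0 ∧ s • r v C ≠ 0}.Finite) : ∃ e : ℤ, C = e • A := by
  obtain ⟨α, β, hα, hrel⟩ : ∃ α β : ℤ, α ≠ 0 ∧ α • C = β • A := by
    by_contra! hAC
    exact hr.infinite_setOf_map_eq_zero_and_ne_zero
      (fun α β h => not_not.mp fun hα => hAC α β hα h) (by simpa using H 1 one_pos)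
  by_cases hA : A = 0
  · exact ⟨0, by simpa [hA, hα] using hrel⟩
  -- A reduction of `A` of order `ℓ ^ j` is killed by `α`, hence by `β`.
  have hdvd : α ∣ β := by
    rw [← Int.natAbs_dvd_natAbs, Nat.dvd_iff_prime_pow_dvd_dvd]
    intro ℓ j hℓ hℓα
    have hpos : 0 < ℓ ^ j := pow_pos hℓ.pos j
    obtain ⟨v, hord, hgood⟩ :=
      ((hr.infinite_setOf_addOrderOf_eq hA hℓ j).sdiff (H _ hpos)).nonempty
    change addOrderOf (r v A) = ℓ ^ j at hord
    have hCv : ℓ ^ j • r v C = 0 := not_not.mp fun hne =>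
      hgood ⟨by rw [← hord]; exact addOrderOf_nsmul_eq_zero _, hne⟩
    have hαv : α • r v C = 0 := by
      rw [← addOrderOf_dvd_iff_zsmul_eq_zero]
      exact Int.natCast_dvd.mpr
        ((Nat.cast_dvd_cast (addOrderOf_dvd_of_nsmul_eq_zero hCv)).trans hℓα)
    have hβv : β • r v A = 0 := by rw [← map_zsmul, ← hrel, map_zsmul, hαv]
    rw [← addOrderOf_dvd_iff_zsmul_eq_zero, hord] at hβv
    exact Int.natCast_dvd.mp hβv
  obtain ⟨e, rfl⟩ := hdvd
  exact ⟨e, smul_right_injective B hα (by simpa [mul_smul] using hrel)⟩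

end HasIndependentReductions

theorem eq_zero_of_forall_zsmul_eq_of_collinear {a P X : B} {α β : ℤ} (hα : α ≠ 0) (hβ : β ≠ 0)
    (hP : P ≠ 0) (hrel : α • a = β • P)
    (h : ∀ t : ℕ, ∃ d : ℤ, (t : ℤ) • X = d • (a + (t : ℤ) • P)) : X = 0 := by
  have hline : ∀ t : ℕ, ∃ d : ℤ, (t : ℤ) • α • X = (d * (β + α * t)) • P := by
    intro t
    obtain ⟨d, hd⟩ := h t
    refine ⟨d, ?_⟩
    rw [smul_comm, hd, smul_comm, smul_add, hrel, smul_comm α (t : ℤ)]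
    module
  obtain ⟨d₁, hd₁⟩ := hline 1
  set c := d₁ * (β + α)
  have hX : α • X = c • P := by simpa using hd₁
  have hdvd : ∀ t : ℕ, β + α * t ∣ β * c := by
    intro t
    obtain ⟨d, hd⟩ := hline t
    rw [hX, smul_smul] at hd
    have htc : (t : ℤ) * c = d * (β + α * t) := smul_left_injective ℤ hP hd
    exact ⟨c - α * d, by linear_combination -α * htc⟩
  have hc : c = 0 := (mul_eq_zero.mp (Int.eq_zero_of_forall_add_mul_dvd hα hdvd)).resolve_left hβ
  exact (smul_eq_zero.mp (hX.trans (by rw [hc, zero_smul]))).resolve_left hα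

theorem eq_zero_of_forall_zsmul_eq {a P X : B} (ha : a ≠ 0) (hP : P ≠ 0)
    (h : ∀ t : ℕ, ∃ d : ℤ, (t : ℤ) • X = d • (a + (t : ℤ) • P)) : X = 0 := by
  obtain ⟨d₁, hd₁⟩ := h 1
  obtain ⟨d₂, hd₂⟩ := h 2
  have hrel : (2 * d₁ - d₂) • a = (2 * d₂ - 2 * d₁) • P := by
    push_cast at hd₁ hd₂
    linear_combination (norm := module) hd₂ - (2 : ℤ) • hd₁
  by_cases hα : 2 * d₁ - d₂ = 0
  · rw [hα, zero_smul, eq_comm, smul_eq_zero] at hrel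
    have hd : d₁ = 0 := by have := hrel.resolve_right hP; omega
    simpa [hd] using hd₁
  · refine eq_zero_of_forall_zsmul_eq_of_collinear hα (fun hβ => ?_) hP hrel h
    rw [hβ, zero_smul, smul_eq_zero] at hrel
    exact ha (hrel.resolve_left hα)

theorem sum_add_single_nsmul {ι M : Type*} [Fintype ι] [DecidableEq ι] [AddCommMonoid M]
    (m : ι → ℕ) (k : ι) (t : ℕ) (X : ι → M) :
    ∑ i, (m + Pi.single k t : ι → ℕ) i • X i = ∑ i, m i • X i + t • X k := by
  simp [add_smul, sum_add_distrib, Pi.single_apply, ite_smul]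

theorem exists_eq_zsmul_of_forall_pos_sum {ι : Type*} [Fintype ι] [DecidableEq ι] {P Q : ι → B}
    (hP : ∀ i, P i ≠ 0) (hQ : ∀ i, Q i ≠ 0)
    (h : ∀ m : ι → ℕ, (∀ i, 0 < m i) → ∃ e : ℤ, ∑ i, m i • Q i = e • ∑ i, m i • P i) :
    ∃ e : ℤ, e ≠ 0 ∧ ∀ i, Q i = e • P i := by
  rcases isEmpty_or_nonempty ι with _ | ⟨⟨i₀⟩⟩
  · exact ⟨1, one_ne_zero, isEmptyElim⟩
  have hpos : ∀ (m : ι → ℕ) k t, (∀ i, 0 < m i) → ∀ i, 0 < (m + Pi.single k t : ι → ℕ) i :=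
    fun m k t hm i => (hm i).trans_le (Nat.le_add_right _ _)
  obtain ⟨w, hw, ha⟩ : ∃ w : ι → ℕ, (∀ i, 0 < w i) ∧ ∑ i, w i • P i ≠ 0 := by
    by_cases h1 : ∑ i, (1 : ι → ℕ) i • P i = 0
    · refine ⟨1 + Pi.single i₀ 1, hpos 1 i₀ 1 fun _ => one_pos, ?_⟩
      rw [sum_add_single_nsmul, h1, zero_add, one_smul]
      exact hP i₀
    · exact ⟨1, fun _ => one_pos, h1⟩
  obtain ⟨e, he⟩ := h w hw
  have hQP : ∀ k, Q k = e • P k := by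
    refine fun k => sub_eq_zero.mp (eq_zero_of_forall_zsmul_eq ha (hP k) fun t => ?_)
    obtain ⟨d, hd⟩ := h (w + Pi.single k t) (hpos w k t hw)
    rw [sum_add_single_nsmul, sum_add_single_nsmul, ← natCast_zsmul, ← natCast_zsmul] at hd
    exact ⟨d - e, by linear_combination (norm := module) hd - he⟩
  exact ⟨e, fun he0 => hQ i₀ (by rw [hQP, he0, zero_smul]), hQP⟩

end TorsionFree

theorem stmt_9_general {B V : Type*} [AddCommGroup B] [NoZeroSMulDivisors ℤ B]
    {T : V → Type*} [∀ v, AddCommGroup (T v)]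
    (r : ∀ v, B →+ T v)
    (hmain : ∀ (s : ℕ) (R : Fin s → B), (∀ t, ¬ IsOfFinAddOrder (R t)) →
      LinearIndependent ℤ R → ∀ ℓ : ℕ, ℓ.Prime → ∀ k : Fin s → ℕ,
      {v : V | ∀ t, addOrderOf (r v (R t)) = ℓ ^ k t}.Infinite)
    (n : ℕ) (P Q : Fin n → B)
    (hP : ∀ i, ¬ IsOfFinAddOrder (P i)) (hQ : ∀ i, ¬ IsOfFinAddOrder (Q i))
    (hsupp : ∀ ℓ : ℕ, ℓ.Prime → ∀ m : Fin n → ℕ, (∀ i, 0 < m i) →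
      {v : V | ¬ ((∑ i, m i • r v (P i)) = 0 → (∑ i, m i • r v (Q i)) = 0)}.Finite) :
    ∃ e : ℤ, e ≠ 0 ∧ ∀ i, Q i = e • P i := by
  have hr : HasIndependentReductions r := hmain
  refine exists_eq_zsmul_of_forall_pos_sum (fun i h => hP i (h ▸ .zero))
    (fun i h => hQ i (h ▸ .zero)) fun m hm =>
      hr.exists_eq_zsmul_of_support_finite _ _ fun s hs => ?_
  have hscale : ∀ (X : Fin n → B) v, s • r v (∑ i, m i • X i) = ∑ i, (s * m i) • r v (X i) := by
    simp only [map_sum, map_nsmul, smul_sum, mul_smul, implies_true]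
  simpa only [hscale, Classical.not_imp] using
    hsupp 2 Nat.prime_two (fun i => s * m i) fun i => Nat.mul_pos hs (hm i)

theorem stmt_9 {B V : Type*} [AddCommGroup B] [NoZeroSMulDivisors ℤ B]
    {T : V → Type*} [∀ v, AddCommGroup (T v)]
    (htors : ∀ v, ∀ t : T v, IsOfFinAddOrder t)
    (r : ∀ v, B →+ T v)
    (hmain : ∀ (s : ℕ) (R : Fin s → B), (∀ t, ¬ IsOfFinAddOrder (R t)) →
      LinearIndependent ℤ R → ∀ ℓ : ℕ, ℓ.Prime → ∀ k : Fin s → ℕ,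
      {v : V | ∀ t, addOrderOf (r v (R t)) = ℓ ^ k t}.Infinite)
    (n : ℕ) (P Q : Fin n → B)
    (hP : ∀ i, ¬ IsOfFinAddOrder (P i)) (hQ : ∀ i, ¬ IsOfFinAddOrder (Q i))
    (hsupp : ∀ ℓ : ℕ, ℓ.Prime → ∀ m : Fin n → ℕ, (∀ i, 0 < m i) →
      {v : V | ¬ ((∑ i, m i • r v (P i)) = 0 → (∑ i, m i • r v (Q i)) = 0)}.Finite) :
    ∃ e : ℤ, e ≠ 0 ∧ ∀ i, Q i = e • P i :=
  stmt_9_general r hmain n P Q hP hQ hsupp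
end

section
/- Let B be an abelian group with a family of homomorphisms r_v : B → T_v to torsion abelian groups (v ∈ V). Let P1, P2 ∈ B and x a positive integer, y a nonzero integer with x·P1 = y·P2. Suppose e1, e2 are integers with Q1 = e1·P1, Q2 = e2·P2, and that for all positive integers m1, m2 and all but finitely many v, m1·r_v(P1) + m2·r_v(P2) = 0 implies m1·r_v(Q1) + m2·r_v(Q2) = 0. Assume also that for every prime ℓ and every k ∈ ℕ there are infinitely many v such that r_v(P2) has order exactly ℓ^k. Then e1 = e2, provided P2 has infinite order. -/
/-!
Reduce modulo a place `v` where `r_v(P2)` has order `n = 2^k`. Taking `m1 = x` and `m2 ≡ -y`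
(mod `n`), the relation `x • P1 = y • P2` makes `m1 • r_v(P1) + m2 • r_v(P2)` vanish, so the
support hypothesis forces `n ∣ y * (e1 - e2)`. As `k` is arbitrary, `y * (e1 - e2) = 0`.
-/

lemma Int.exists_pos_natCast_add_dvd (y : ℤ) {n : ℕ} (hn : 0 < n) :
    ∃ m : ℕ, 0 < m ∧ (n : ℤ) ∣ y + m := by
  have hlt : y % n < n := Int.emod_lt_of_pos y (by exact_mod_cast hn)
  have hnonneg : 0 ≤ y % n := Int.emod_nonneg y (by exact_mod_cast hn.ne')
  refine ⟨(n - y % n).toNat, by omega, ?_⟩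
  rw [Int.toNat_of_nonneg (by omega), Int.emod_def]
  exact ⟨1 + y / n, by ring⟩

lemma Int.eq_zero_of_forall_two_pow_dvd {c : ℤ} (h : ∀ k : ℕ, (2 ^ k : ℤ) ∣ c) : c = 0 :=
  Int.eq_zero_of_dvd_of_natAbs_lt_natAbs (h c.natAbs) (by simpa using Nat.lt_two_pow_self)

lemma addOrderOf_dvd_mul_sub_of_smul_eq {A : Type*} [AddCommGroup A] {p t : A} {y e1 e2 : ℤ}
    {m1 m2 : ℕ} (hdep : (m1 : ℤ) • p = y • t) (hm2 : (addOrderOf t : ℤ) ∣ y + m2)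
    (himp : m1 • p + m2 • t = 0 → m1 • (e1 • p) + m2 • (e2 • t) = 0) :
    (addOrderOf t : ℤ) ∣ y * (e1 - e2) := by
  have hvanish : m1 • p + m2 • t = 0 := by
    rw [← natCast_zsmul, ← natCast_zsmul, hdep, ← add_zsmul]
    exact addOrderOf_dvd_iff_zsmul_eq_zero.mp hm2
  have hlocal : (addOrderOf t : ℤ) ∣ e1 * y + m2 * e2 := by
    refine addOrderOf_dvd_iff_zsmul_eq_zero.mpr ?_
    rw [← himp hvanish, ← natCast_zsmul, ← natCast_zsmul, smul_comm (m1 : ℤ) e1, hdep,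
      add_zsmul, mul_zsmul, mul_zsmul]
  have hsub := dvd_sub hlocal (hm2.mul_right e2)
  rwa [show e1 * y + m2 * e2 - (y + m2) * e2 = y * (e1 - e2) by ring] at hsub

theorem stmt_15_general {B V : Type*} [AddCommGroup B]
    {T : V → Type*} [∀ v, AddCommGroup (T v)]
    (r : ∀ v, B →+ T v)
    (P1 P2 Q1 Q2 : B) (x y : ℤ) (hx : 0 < x) (hy : y ≠ 0)
    (hdep : x • P1 = y • P2)
    (e1 e2 : ℤ) (hQ1 : Q1 = e1 • P1) (hQ2 : Q2 = e2 • P2)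
    (hsupp : ∀ m1 m2 : ℕ, 0 < m1 → 0 < m2 →
      {v : V | ¬ (m1 • r v P1 + m2 • r v P2 = 0 →
        m1 • r v Q1 + m2 • r v Q2 = 0)}.Finite)
    (hord : ∀ ℓ : ℕ, ℓ.Prime → ∀ k : ℕ,
      {v : V | addOrderOf (r v P2) = ℓ ^ k}.Infinite) :
    e1 = e2 := by
  subst hQ1 hQ2
  have hx' : ((x.toNat : ℕ) : ℤ) = x := Int.toNat_of_nonneg hx.le
  suffices h : y * (e1 - e2) = 0 by
    simpa [hy, sub_eq_zero] using h
  refine Int.eq_zero_of_forall_two_pow_dvd fun k => ?_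
  obtain ⟨m2, hm2, hdvd⟩ := Int.exists_pos_natCast_add_dvd y (Nat.pow_pos (n := k) two_pos)
  obtain ⟨v, hv, hgood⟩ :=
    ((hord 2 Nat.prime_two k).sdiff (hsupp x.toNat m2 (by omega) hm2)).nonempty
  have horder : addOrderOf (r v P2) = 2 ^ k := hv
  have hdvd' := addOrderOf_dvd_mul_sub_of_smul_eq (p := r v P1) (e1 := e1) (e2 := e2)
    (by rw [hx', ← map_zsmul, hdep, map_zsmul]) (horder ▸ hdvd) (by simpa [map_zsmul] using hgood)
  exact_mod_cast horder ▸ hdvd'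

theorem stmt_15 {B V : Type*} [AddCommGroup B]
    {T : V → Type*} [∀ v, AddCommGroup (T v)]
    (htors : ∀ v, ∀ t : T v, IsOfFinAddOrder t)
    (r : ∀ v, B →+ T v)
    (P1 P2 Q1 Q2 : B) (x y : ℤ) (hx : 0 < x) (hy : y ≠ 0)
    (hdep : x • P1 = y • P2)
    (e1 e2 : ℤ) (hQ1 : Q1 = e1 • P1) (hQ2 : Q2 = e2 • P2)
    (hsupp : ∀ m1 m2 : ℕ, 0 < m1 → 0 < m2 →
      {v : V | ¬ (m1 • r v P1 + m2 • r v P2 = 0 →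
        m1 • r v Q1 + m2 • r v Q2 = 0)}.Finite)
    (hord : ∀ ℓ : ℕ, ℓ.Prime → ∀ k : ℕ,
      {v : V | addOrderOf (r v P2) = ℓ ^ k}.Infinite)
    (hP2 : ¬ IsOfFinAddOrder P2) :
    e1 = e2 :=
  stmt_15_general r P1 P2 Q1 Q2 x y hx hy hdep e1 e2 hQ1 hQ2 hsupp hord
end
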